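/- Insertion into the heap flattening commutes with heap insertion: if t is a heap, then insert x (H2list t) = H2list (istH x t). -/

import Mathlib

variable {α : Type*}

def merge [LinearOrder α] : List α → List α → List α
  | [], l => l
  | l, [] => l
  | h1 :: t1, h2 :: t2 =>
    if h1 ≤ h2 then h1 :: merge t1 (h2 :: t2) else h2 :: merge (h1 :: t1) t2
termination_by l1 l2 => l1.length + l2.length

def insrt [LinearOrder α] (x : α) : List α → List α
  | [] => [x]
  | h :: t => if x ≤ h then x :: h :: t else h :: insrt x t

inductive BTree (α : Type*) where
  | Empty : BTree α
  | Node : α → BTree α → BTree α → BTree α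


inductive AllT (p : α → Prop) : BTree α → Prop
  | empty : AllT p BTree.Empty
  | node : ∀ {x l r}, p x → AllT p l → AllT p r → AllT p (BTree.Node x l r)

inductive BST [LinearOrder α] : BTree α → Prop
  | empty : BST BTree.Empty
  | node : ∀ {x : α} {l r}, AllT (· < x) l → AllT (x ≤ ·) r → BST l → BST r →
      BST (BTree.Node x l r)

inductive HEAP [LinearOrder α] : BTree α → Prop
  | empty : HEAP BTree.Empty
  | node : ∀ {x : α} {l r}, AllT (x ≤ ·) l → AllT (x ≤ ·) r → HEAP l → HEAP r →
      HEAP (BTree.Node x l r)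

def istBST [LinearOrder α] (x : α) : BTree α → BTree α
  | BTree.Empty => BTree.Node x BTree.Empty BTree.Empty
  | BTree.Node y l r => if x < y then BTree.Node y (istBST x l) r else BTree.Node y l (istBST x r)

def istH [LinearOrder α] (x : α) : BTree α → BTree α
  | BTree.Empty => BTree.Node x BTree.Empty BTree.Empty
  | BTree.Node y l r => if x < y then BTree.Node x (istH y r) l else BTree.Node y (istH x r) l

def BST2list : BTree α → List α
  | BTree.Empty => []
  | BTree.Node x l r => BST2list l ++ x :: BST2list r

def H2list [LinearOrder α] : BTree α → List α
  | BTree.Empty => []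
  | BTree.Node x l r => x :: merge (H2list l) (H2list r)

def BT2list [LinearOrder α] : BTree α → List α
  | BTree.Empty => []
  | BTree.Node x l r => merge [x] (merge (BT2list l) (BT2list r))

def buildBST [LinearOrder α] (l : List α) : BTree α :=
  l.foldl (fun t x => istBST x t) BTree.Empty

def isort [LinearOrder α] (l : List α) : List α :=
  l.foldr insrt []

/-! Both sides are sorted — the flattening of a heap is sorted and `istH` preserves the heap
property — and both are permutations of `x :: H2list t`; sorted permutations of each other are
equal. -/

open scoped List

section Lists

variable [LinearOrder α]

theorem merge_eq_list_merge : ∀ l₁ l₂ : List α, merge l₁ l₂ = l₁.merge l₂ (· ≤ ·)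
  | [], l => by simp [merge]
  | _ :: _, [] => by simp [merge]
  | h₁ :: t₁, h₂ :: t₂ => by
    rw [merge, List.cons_merge_cons, merge_eq_list_merge t₁, merge_eq_list_merge (h₁ :: t₁) t₂]
    simp only [decide_eq_true_eq]
termination_by l₁ l₂ => l₁.length + l₂.length

theorem merge_perm_append (l₁ l₂ : List α) : merge l₁ l₂ ~ l₁ ++ l₂ := by
  rw [merge_eq_list_merge]
  exact List.merge_perm_append _

theorem insrt_eq_orderedInsert (x : α) :
    ∀ l : List α, insrt x l = l.orderedInsert (· ≤ ·) x
  | [] => rfl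
  | h :: t => by rw [insrt, List.orderedInsert_cons, insrt_eq_orderedInsert x t]

end Lists

theorem AllT.imp {p q : α → Prop} (hpq : ∀ a, p a → q a) :
    ∀ {t : BTree α}, AllT p t → AllT q t
  | _, .empty => .empty
  | _, .node hx hl hr => .node (hpq _ hx) (hl.imp hpq) (hr.imp hpq)

section Heaps

variable [LinearOrder α]

theorem H2list_node_perm (x : α) (l r : BTree α) :
    H2list (.Node x l r) ~ x :: (H2list l ++ H2list r) :=
  (merge_perm_append _ _).cons x

theorem AllT.forall_mem_H2list {p : α → Prop} :
    ∀ {t : BTree α}, AllT p t → ∀ b ∈ H2list t, p b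
  | _, .empty => by simp [H2list]
  | _, .node hx hl hr => by
    simpa [(H2list_node_perm _ _ _).mem_iff, or_imp, forall_and, hx] using
      ⟨hl.forall_mem_H2list, hr.forall_mem_H2list⟩

theorem HEAP.pairwise_H2list : ∀ {t : BTree α}, HEAP t → (H2list t).Pairwise (· ≤ ·)
  | _, .empty => .nil
  | .Node x _ _, .node hxl hxr hl hr => by
    have hx_le : ∀ b ∈ H2list (.Node x _ _), x ≤ b :=
      (AllT.node le_rfl hxl hxr).forall_mem_H2list
    rw [H2list, List.pairwise_cons]
    refine ⟨fun b hb => hx_le b (List.mem_cons_of_mem x hb), ?_⟩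
    rw [merge_eq_list_merge]
    exact hl.pairwise_H2list.merge hr.pairwise_H2list

theorem AllT.istH {p : α → Prop} {x : α} :
    ∀ {t : BTree α}, AllT p t → p x → AllT p (istH x t)
  | _, .empty, hx => .node hx .empty .empty
  | _, .node hy hl hr, hx => by
    rw [_root_.istH]
    split_ifs
    · exact .node hx (hr.istH hy) hl
    · exact .node hy (hr.istH hx) hl

theorem HEAP.istH : ∀ {x : α} {t : BTree α}, HEAP t → HEAP (istH x t)
  | _, _, .empty => .node .empty .empty .empty .empty
  | x, .Node y l r, .node hyl hyr hl hr => by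
    rw [_root_.istH]
    split_ifs with hxy
    · have hx : ∀ a, y ≤ a → x ≤ a := fun a => hxy.le.trans
      exact .node ((hyr.imp hx).istH hxy.le) (hyl.imp hx) hr.istH hl
    · exact .node (hyr.istH (not_lt.1 hxy)) hyl hr.istH hl

theorem H2list_istH_perm (x : α) : ∀ t : BTree α, H2list (istH x t) ~ x :: H2list t
  | .Empty => by simp [istH, H2list, merge]
  | .Node y l r => by
    rw [istH]
    split_ifs
    · calc H2list (.Node x (istH y r) l)
          ~ x :: (H2list (istH y r) ++ H2list l) := H2list_node_perm _ _ _
        _ ~ x :: (y :: H2list r ++ H2list l) := ((H2list_istH_perm y r).append_right _).cons x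
        _ ~ x :: y :: (H2list l ++ H2list r) := (List.perm_append_comm.cons y).cons x
        _ ~ x :: H2list (.Node y l r) := (H2list_node_perm _ _ _).symm.cons x
    · calc H2list (.Node y (istH x r) l)
          ~ y :: (H2list (istH x r) ++ H2list l) := H2list_node_perm _ _ _
        _ ~ y :: (x :: H2list r ++ H2list l) := ((H2list_istH_perm x r).append_right _).cons y
        _ ~ x :: y :: (H2list l ++ H2list r) :=
          ((List.perm_append_comm.cons x).cons y).trans (.swap x y _)
        _ ~ x :: H2list (.Node y l r) := (H2list_node_perm _ _ _).symm.cons x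

end Heaps

theorem insert_H2list_comm [LinearOrder α] (x : α) (t : BTree α) (h : HEAP t) :
    insrt x (H2list t) = H2list (istH x t) := by
  rw [insrt_eq_orderedInsert]
  exact List.Perm.eq_of_pairwise' (h.pairwise_H2list.orderedInsert x _)
    h.istH.pairwise_H2list ((List.perm_orderedInsert _ x _).trans (H2list_istH_perm x t).symm)
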